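/- For R ≤ R_cr¹(P_{XY}) (the critical rate, the largest R for which e_r¹(R, P_{XY}) meets its supporting line of slope one), the exponent simplifies to e_r¹(R, P_{XY}) = min{D(Q ‖ P_{XY}) : Q with H_Q(X̃|Ỹ) ≥ R}. In particular, for such R the clipped-rate term |R − H_Q(X̃|Ỹ)|⁺ vanishes at the minimizer. -/

import Mathlib

/-!
Write `F_R(Q) = D(Q‖P) + |R − H_Q|⁺`. Since `F_R ≥ (D − H) + R`, with equality at `R = H(Q₀)`
for a minimiser `Q₀` of `D − H`, the supporting line of slope one is `R ↦ R + (D − H)(Q₀)` and it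
touches the curve at `H(Q₀)`; hence `R ≤ R_cr ≤ H(Q₀)`. If a minimiser `Q` of `F_R` has
`H(Q) < R`, move along the segment from `Q` to `Q₀` to the point where the chord of `H` takes the
value `R`: concavity of `H` keeps `H ≥ R` there, while convexity of `D` together with
`(D − H)(Q₀) ≤ (D − H)(Q)` keeps `D ≤ F_R(Q)`. Both convexities come from the log-sum inequality.
-/

/-- Kullback-Leibler divergence (base 2) between distributions on a finite set. -/
noncomputable def klDiv2 {A : Type*} [Fintype A] (Q P : A → ℝ) : ℝ :=
  ∑ a, Q a * Real.logb 2 (Q a / P a)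

/-- Conditional entropy (base 2) of the first coordinate given the second. -/
noncomputable def condEnt1 {A B : Type*} [Fintype A] [Fintype B] (Q : A × B → ℝ) : ℝ :=
  -∑ z : A × B, Q z * Real.logb 2 (Q z / (∑ a, Q (a, z.2)))

/-- The random-coding error exponent
`e_r(R, P) = min_Q {D(Q‖P) + |R − H_Q(X̃|Ỹ)|⁺}`. -/
noncomputable def erExp {A B : Type*} [Fintype A] [Fintype B]
    (R : ℝ) (P : A × B → ℝ) : ℝ :=
  sInf { e | ∃ Q : A × B → ℝ, (∀ z, 0 ≤ Q z) ∧ (∑ z : A × B, Q z = 1) ∧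
    e = klDiv2 Q P + max (R - condEnt1 Q) 0 }

/-- The intercept of the supporting line of slope one of the curve `R ↦ e_r(R, P)`. -/
noncomputable def slopeOneIntercept {A B : Type*} [Fintype A] [Fintype B]
    (P : A × B → ℝ) : ℝ :=
  sInf { b | ∃ R' : ℝ, b = erExp R' P - R' }

/-- The critical rate `R_cr(P)`: the rate at which the curve `e_r(·, P)` meets its
supporting line of slope one. -/
noncomputable def Rcr {A B : Type*} [Fintype A] [Fintype B] (P : A × B → ℝ) : ℝ :=
  sInf { R' | erExp R' P = R' + slopeOneIntercept P }

open Set Real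

section ClippedExponent

variable {E : Type*} {S : Set E} {D H : E → ℝ} {R : ℝ}

theorem ConvexOn.exists_le_of_concaveOn [AddCommGroup E] [Module ℝ E]
    (hD : ConvexOn ℝ S D) (hH : ConcaveOn ℝ S H) {x y : E} (hx : x ∈ S) (hy : y ∈ S)
    (hxy : D y - H y ≤ D x - H x) (hRy : R ≤ H y) :
    ∃ z ∈ S, R ≤ H z ∧ D z ≤ D x + max (R - H x) 0 := by
  rcases le_or_gt R (H x) with hRx | hxR
  · exact ⟨x, hx, hRx, le_add_of_nonneg_right (le_max_right _ _)⟩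
  have hgap : 0 < H y - H x := by linarith
  set t := (R - H x) / (H y - H x)
  have ht₀ : 0 ≤ t := div_nonneg (by linarith) hgap.le
  have ht₁ : 0 ≤ 1 - t := sub_nonneg.2 (div_le_one_of_le₀ (by linarith) hgap.le)
  have hHt : (1 - t) * H x + t * H y = R := by
    simp only [t]; field_simp; ring
  have hcombo : 1 - t + t = 1 := by ring
  refine ⟨(1 - t) • x + t • y, hD.1 hx hy ht₁ ht₀ hcombo, ?_, ?_⟩
  · have hconc := hH.2 hx hy ht₁ ht₀ hcombo
    simp only [smul_eq_mul] at hconc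
    linarith
  · have hconv := hD.2 hx hy ht₁ ht₀ hcombo
    simp only [smul_eq_mul] at hconv
    have hslope := mul_le_mul_of_nonneg_left (show D y - D x ≤ H y - H x by linarith) ht₀
    rw [max_eq_left (by linarith)]
    linarith

noncomputable def clippedExponent (S : Set E) (D H : E → ℝ) (R : ℝ) : ℝ :=
  sInf ((fun x => D x + max (R - H x) 0) '' S)

noncomputable def criticalRate (S : Set E) (D H : E → ℝ) : ℝ :=
  sInf {R' | clippedExponent S D H R' =
    R' + sInf {b | ∃ R'', b = clippedExponent S D H R'' - R''}}

theorem le_clippedExponent {b : ℝ} (hS : S.Nonempty)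
    (h : ∀ x ∈ S, b ≤ D x + max (R - H x) 0) : b ≤ clippedExponent S D H R :=
  le_csInf (hS.image _) (forall_mem_image.2 h)

theorem clippedExponent_le (hbdd : BddBelow (D '' S)) {x : E} (hx : x ∈ S) :
    clippedExponent S D H R ≤ D x + max (R - H x) 0 := by
  obtain ⟨m, hm⟩ := hbdd
  refine csInf_le ⟨m, forall_mem_image.2 fun y hy => ?_⟩ (mem_image_of_mem _ hx)
  exact (hm (mem_image_of_mem D hy)).trans (le_add_of_nonneg_right (le_max_right _ _))

theorem clippedExponent_eq_of_isMinOn {x : E} (hx : x ∈ S)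
    (hmin : IsMinOn (fun x => D x + max (R - H x) 0) S x) :
    clippedExponent S D H R = D x + max (R - H x) 0 :=
  IsLeast.csInf_eq ⟨mem_image_of_mem _ hx, forall_mem_image.2 (isMinOn_iff.1 hmin)⟩

theorem criticalRate_le_of_isMinOn {x₀ : E} (hS : S.Nonempty) (hbdd : BddBelow (D '' S))
    (hx₀ : x₀ ∈ S) (hmin : IsMinOn (D - H) S x₀) :
    criticalRate S D H ≤ H x₀ := by
  have hlow : ∀ R', D x₀ - H x₀ + R' ≤ clippedExponent S D H R' := fun R' =>
    le_clippedExponent hS fun x hx => by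
      have := isMinOn_iff.1 hmin x hx
      simp only [Pi.sub_apply] at this
      linarith [le_max_left (R' - H x) 0]
  have hval : clippedExponent S D H (H x₀) = D x₀ :=
    le_antisymm (by simpa using clippedExponent_le (H := H) (R := H x₀) hbdd hx₀)
      (by linarith [hlow (H x₀)])
  have hint : sInf {b | ∃ R', b = clippedExponent S D H R' - R'} = D x₀ - H x₀ :=
    IsLeast.csInf_eq ⟨⟨H x₀, by rw [hval]⟩, by rintro _ ⟨R', rfl⟩; linarith [hlow R']⟩
  obtain ⟨m, hm⟩ := hbdd
  refine csInf_le ⟨m - (D x₀ - H x₀), fun R' hR' => ?_⟩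
    (by simp only [mem_ofPred_eq, hint, hval]; ring)
  have : m ≤ clippedExponent S D H R' := le_clippedExponent hS fun x hx =>
    (hm (mem_image_of_mem D hx)).trans (le_add_of_nonneg_right (le_max_right _ _))
  rw [mem_ofPred_eq, hint] at hR'
  linarith

theorem isLeast_clippedExponent_of_le_criticalRate [AddCommGroup E] [Module ℝ E]
    [TopologicalSpace E] (hS : IsCompact S) (hS₀ : S.Nonempty)
    (hDc : ContinuousOn D S) (hHc : ContinuousOn H S)
    (hD : ConvexOn ℝ S D) (hH : ConcaveOn ℝ S H)
    (hR : R ≤ criticalRate S D H) :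
    IsLeast (D '' {x ∈ S | R ≤ H x}) (clippedExponent S D H R) := by
  have hbdd : BddBelow (D '' S) := hS.bddBelow_image hDc
  obtain ⟨x₀, hx₀, hmin₀⟩ := hS.exists_isMinOn hS₀ (hDc.sub hHc)
  obtain ⟨x, hx, hmin⟩ := hS.exists_isMinOn hS₀
    (hDc.add (ContinuousOn.sup (continuousOn_const.sub hHc) continuousOn_const) : ContinuousOn
      (fun x => D x + max (R - H x) 0) S)
  obtain ⟨z, hz, hRz, hDz⟩ := hD.exists_le_of_concaveOn hH hx hx₀ (isMinOn_iff.1 hmin₀ x hx)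
    (hR.trans (criticalRate_le_of_isMinOn hS₀ hbdd hx₀ hmin₀))
  have hle : ∀ y ∈ S, R ≤ H y → clippedExponent S D H R ≤ D y := fun y hy hRy => by
    simpa [hRy] using clippedExponent_le (H := H) (R := R) hbdd hy
  refine ⟨⟨z, ⟨hz, hRz⟩, le_antisymm ?_ (hle z hz hRz)⟩, ?_⟩
  · rwa [clippedExponent_eq_of_isMinOn hx hmin]
  · rintro _ ⟨y, ⟨hy, hRy⟩, rfl⟩
    exact hle y hy hRy

end ClippedExponent

theorem mul_log_div_add_le {a b c d : ℝ} (ha : 0 ≤ a) (hb : 0 ≤ b) (hc : 0 ≤ c) (hd : 0 ≤ d)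
    (hac : c = 0 → a = 0) (hbd : d = 0 → b = 0) :
    (a + b) * log ((a + b) / (c + d)) ≤ a * log (a / c) + b * log (b / d) := by
  rcases hc.eq_or_lt with rfl | hc
  · simp [hac rfl]
  rcases hd.eq_or_lt with rfl | hd
  · simp [hbd rfl]
  -- `p log (p / q) = q f (p / q)` with `f x = x log x`: a perspective of a convex function
  have hpersp : ∀ p {q : ℝ}, q ≠ 0 → p * log (p / q) = q * (p / q * log (p / q)) :=
    fun p q hq => by rw [← mul_assoc, mul_div_cancel₀ p hq]
  have hcd : 0 < c + d := by positivity
  have hconv := convexOn_mul_log.2 (mem_Ici.2 (div_nonneg ha hc.le))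
    (mem_Ici.2 (div_nonneg hb hd.le)) (div_nonneg hc.le hcd.le) (div_nonneg hd.le hcd.le)
    (by field_simp)
  have hmid : c / (c + d) * (a / c) + d / (c + d) * (b / d) = (a + b) / (c + d) := by
    field_simp
  simp only [smul_eq_mul, hmid] at hconv
  rw [hpersp _ hcd.ne', hpersp a hc.ne', hpersp b hd.ne']
  calc (c + d) * ((a + b) / (c + d) * log ((a + b) / (c + d)))
      ≤ (c + d) * (c / (c + d) * (a / c * log (a / c)) + d / (c + d) * (b / d * log (b / d))) :=
        mul_le_mul_of_nonneg_left hconv hcd.le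
    _ = c * (a / c * log (a / c)) + d * (b / d * log (b / d)) := by field_simp

theorem mul_logb_div_combo_le {s t p₀ p₁ q₀ q₁ : ℝ} (hs : 0 ≤ s) (ht : 0 ≤ t)
    (hp₀ : 0 ≤ p₀) (hp₁ : 0 ≤ p₁) (hq₀ : 0 ≤ q₀) (hq₁ : 0 ≤ q₁)
    (h₀ : q₀ = 0 → p₀ = 0) (h₁ : q₁ = 0 → p₁ = 0) :
    (s * p₀ + t * p₁) * logb 2 ((s * p₀ + t * p₁) / (s * q₀ + t * q₁)) ≤
      s * (p₀ * logb 2 (p₀ / q₀)) + t * (p₁ * logb 2 (p₁ / q₁)) := by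
  have hscale : ∀ r p q : ℝ, r * p * log (r * p / (r * q)) = r * (p * log (p / q)) := by
    intro r p q
    rcases eq_or_ne r 0 with rfl | hr
    · simp
    · rw [mul_div_mul_left _ _ hr, mul_assoc]
  have hsupp : ∀ {r p q : ℝ}, (q = 0 → p = 0) → r * q = 0 → r * p = 0 := fun h hrq => by
    rcases mul_eq_zero.1 hrq with hr | hq
    · simp [hr]
    · simp [h hq]
  have hlog := mul_log_div_add_le (mul_nonneg hs hp₀) (mul_nonneg ht hp₁)
    (mul_nonneg hs hq₀) (mul_nonneg ht hq₁) (hsupp h₀) (hsupp h₁)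
  rw [hscale, hscale] at hlog
  simp only [logb, ← mul_div_assoc, ← add_div]
  exact div_le_div_of_nonneg_right hlog (log_nonneg one_le_two)

theorem convexOn_sum_mul_logb_div {ι : Type*} [Fintype ι] (q : (ι → ℝ) →ᵃ[ℝ] (ι → ℝ))
    (hq : ∀ x, 0 ≤ x → 0 ≤ q x) (hsupp : ∀ x, 0 ≤ x → ∀ i, q x i = 0 → x i = 0) :
    ConvexOn ℝ (Ici 0) fun x => ∑ i, x i * logb 2 (x i / q x i) := by
  refine ⟨convex_Ici 0, fun x hx y hy s t hs ht hst => ?_⟩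
  dsimp only
  rw [Convex.combo_affine_apply hst]
  simp only [smul_eq_mul, Finset.mul_sum, ← Finset.sum_add_distrib, Pi.add_apply, Pi.smul_apply]
  exact Finset.sum_le_sum fun i _ => mul_logb_div_combo_le hs ht (hx i) (hy i)
    (hq x hx i) (hq y hy i) (hsupp x hx i) (hsupp y hy i)

theorem continuous_mul_logb : Continuous fun x : ℝ => x * logb 2 x := by
  simp only [logb, ← mul_div_assoc]
  exact continuous_mul_log.div_const _

theorem convexOn_klDiv2 {ι : Type*} [Fintype ι] {P : ι → ℝ} (hP : ∀ i, 0 < P i) :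
    ConvexOn ℝ (Ici 0) fun Q => klDiv2 Q P :=
  convexOn_sum_mul_logb_div (AffineMap.const ℝ (ι → ℝ) P) (fun _ _ i => (hP i).le)
    fun _ _ i h => absurd h (hP i).ne'

theorem continuous_klDiv2 {ι : Type*} [Fintype ι] {P : ι → ℝ} (hP : ∀ i, P i ≠ 0) :
    Continuous fun Q => klDiv2 Q P := by
  refine continuous_finsetSum _ fun i _ => ?_
  have hpersp : (fun Q : ι → ℝ => Q i * logb 2 (Q i / P i)) =
      fun Q => P i * (Q i / P i * logb 2 (Q i / P i)) :=
    funext fun Q => by rw [← mul_assoc, mul_div_cancel₀ _ (hP i)]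
  rw [hpersp]
  exact continuous_const.mul (continuous_mul_logb.comp ((continuous_apply i).div_const _))

section CondEnt

variable {A B : Type*} [Fintype A] [Fintype B]

theorem concaveOn_condEnt1 : ConcaveOn ℝ (Ici 0) (condEnt1 : (A × B → ℝ) → ℝ) := by
  let marginal : (A × B → ℝ) →ₗ[ℝ] (A × B → ℝ) :=
    { toFun := fun Q z => ∑ a, Q (a, z.2)
      map_add' := fun _ _ => by ext; simp [Finset.sum_add_distrib]
      map_smul' := fun _ _ => by ext; simp [Finset.mul_sum] }
  have hconv := convexOn_sum_mul_logb_div marginal.toAffineMap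
    (fun Q hQ z => Finset.sum_nonneg fun a _ => hQ (a, z.2))
    fun Q hQ z h => (Finset.sum_eq_zero_iff_of_nonneg fun a _ => hQ (a, z.2)).1 h z.1
      (Finset.mem_univ _)
  have hneg : (fun Q => ∑ z, Q z * logb 2 (Q z / marginal.toAffineMap Q z)) = -condEnt1 := by
    funext Q
    simp only [Pi.neg_apply, condEnt1, neg_neg]
    rfl
  exact neg_convexOn_iff.1 (hneg ▸ hconv)

theorem condEnt1_eq_sub {Q : A × B → ℝ} (hQ : 0 ≤ Q) :
    condEnt1 Q = ∑ b, (∑ a, Q (a, b)) * logb 2 (∑ a, Q (a, b)) - ∑ z, Q z * logb 2 (Q z) := by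
  have hterm : ∀ z, Q z * logb 2 (Q z / ∑ a, Q (a, z.2)) =
      Q z * logb 2 (Q z) - Q z * logb 2 (∑ a, Q (a, z.2)) := fun z => by
    rcases (hQ z).eq_or_lt with h | h
    · simp [← h]
    · have hmarg : 0 < ∑ a, Q (a, z.2) := h.trans_le
        (Finset.single_le_sum (fun a _ => hQ (a, z.2)) (Finset.mem_univ z.1))
      rw [logb_div h.ne' hmarg.ne', mul_sub]
  have hmarg : ∑ z : A × B, Q z * logb 2 (∑ a, Q (a, z.2)) =
      ∑ b, (∑ a, Q (a, b)) * logb 2 (∑ a, Q (a, b)) := by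
    rw [Fintype.sum_prod_type_right]
    simp only [Finset.sum_mul]
  rw [condEnt1, Finset.sum_congr rfl fun z _ => hterm z, Finset.sum_sub_distrib, hmarg]
  ring

theorem continuousOn_condEnt1 : ContinuousOn (condEnt1 : (A × B → ℝ) → ℝ) (Ici 0) := by
  refine ContinuousOn.congr (Continuous.continuousOn ?_) fun Q hQ => condEnt1_eq_sub hQ
  exact (continuous_finsetSum _ fun b _ => continuous_mul_logb.comp
    (continuous_finsetSum _ fun a _ => continuous_apply (a, b))).sub
    (continuous_finsetSum _ fun z _ => continuous_mul_logb.comp (continuous_apply z))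

end CondEnt

theorem erExp_eq_clippedExponent {A B : Type*} [Fintype A] [Fintype B] (R : ℝ) (P : A × B → ℝ) :
    erExp R P = clippedExponent (stdSimplex ℝ (A × B)) (fun Q => klDiv2 Q P) condEnt1 R := by
  simp only [erExp, clippedExponent, image, stdSimplex, mem_ofPred_eq, and_assoc, eq_comm]

theorem Rcr_eq_criticalRate {A B : Type*} [Fintype A] [Fintype B] (P : A × B → ℝ) :
    Rcr P = criticalRate (stdSimplex ℝ (A × B)) (fun Q => klDiv2 Q P) condEnt1 := by
  simp only [Rcr, slopeOneIntercept, erExp_eq_clippedExponent, criticalRate]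

theorem stmt17_general (X Y : Type) [Fintype X] [Fintype Y]
    (P : X × Y → ℝ) (hP0 : ∀ z, 0 < P z) (hP1 : ∑ z : X × Y, P z = 1)
    (R : ℝ) (hR : R ≤ Rcr P) :
    erExp R P = sInf { e | ∃ Q : X × Y → ℝ, (∀ z, 0 ≤ Q z) ∧
      (∑ z : X × Y, Q z = 1) ∧ R ≤ condEnt1 Q ∧ e = klDiv2 Q P } ∧
    ∃ Q : X × Y → ℝ, (∀ z, 0 ≤ Q z) ∧ (∑ z : X × Y, Q z = 1) ∧
      R ≤ condEnt1 Q ∧ klDiv2 Q P = erExp R P := by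
  have hpos : stdSimplex ℝ (X × Y) ⊆ Ici 0 := fun Q hQ => hQ.1
  have hconvex := convex_stdSimplex ℝ (X × Y)
  rw [Rcr_eq_criticalRate] at hR
  have hleast := isLeast_clippedExponent_of_le_criticalRate (isCompact_stdSimplex ℝ _)
    ⟨P, fun z => (hP0 z).le, hP1⟩ (continuous_klDiv2 fun z => (hP0 z).ne').continuousOn
    (continuousOn_condEnt1.mono hpos) ((convexOn_klDiv2 hP0).subset hpos hconvex)
    (concaveOn_condEnt1.subset hpos hconvex) hR
  rw [← erExp_eq_clippedExponent] at hleast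
  simp only [image, stdSimplex, mem_ofPred_eq, and_assoc, eq_comm (a := klDiv2 _ P)] at hleast
  obtain ⟨Q, hQ0, hQ1, hRQ, hQ⟩ := hleast.1
  exact ⟨hleast.csInf_eq.symm, Q, hQ0, hQ1, hRQ, hQ.symm⟩

/-- For `R ≤ R_cr(P)`, the exponent simplifies to the constrained form
`e_r(R,P) = min{D(Q‖P) : H_Q(X̃|Ỹ) ≥ R}`; in particular the clipped-rate term
`|R − H_Q|⁺` vanishes at a minimizer. -/
theorem stmt17 (X Y : Type) [Fintype X] [Fintype Y] [Nonempty X] [Nonempty Y]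
    (P : X × Y → ℝ) (hP0 : ∀ z, 0 < P z) (hP1 : ∑ z : X × Y, P z = 1)
    (R : ℝ) (hR : R ≤ Rcr P) :
    erExp R P = sInf { e | ∃ Q : X × Y → ℝ, (∀ z, 0 ≤ Q z) ∧
      (∑ z : X × Y, Q z = 1) ∧ R ≤ condEnt1 Q ∧ e = klDiv2 Q P } ∧
    ∃ Q : X × Y → ℝ, (∀ z, 0 ≤ Q z) ∧ (∑ z : X × Y, Q z = 1) ∧
      R ≤ condEnt1 Q ∧ klDiv2 Q P = erExp R P :=
  stmt17_general X Y P hP0 hP1 R hR
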